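/- arXiv:1505.03378 — 2 statements merged into one kernel-verified Lean document; each statement's English description precedes it below -/
import Mathlib

section
/- For c > 0 and Y a nonzero real number, the principal-value integral (1/(2πi)) ∫_{c−i∞}^{c+i∞} e^{Ys} ds/s equals 1 if Y > 0 and 0 if Y < 0. -/
/-!
Put `s = c + it`. Integrating by parts in `t`, the truncated integral of `e^{itY}/(c + it)` is
a boundary term of size `O(1/T)` plus `Y⁻¹` times the truncated integral of `e^{itY}/(c + it)²`,
which is absolutely convergent. Its value over the whole line comes from Fourier inversion:
`(c + 2πiξ)⁻²` is the Fourier transform of the ramp `u e^{-cu} 1_{u > 0}`, so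
`∫ e^{itY}/(c + it)² dt = 2π Y e^{-cY} 1_{Y > 0}`, and the factor `e^{cY}/(2πY)` in front turns
this into `1_{Y > 0}`.
-/

open Filter MeasureTheory Set Complex Topology

lemma norm_ofReal_pow_mul_cexp_neg_mul {s : ℂ} (n : ℕ) {u : ℝ} (hu : 0 ≤ u) :
    ‖(u : ℂ) ^ n * cexp (-(s * u))‖ = u ^ n * Real.exp (-s.re * u) := by
  simp [norm_exp, abs_of_nonneg hu]

lemma tendsto_ofReal_pow_mul_cexp_neg_mul_atTop {s : ℂ} (hs : 0 < s.re) (n : ℕ) :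
    Tendsto (fun u : ℝ => (u : ℂ) ^ n * cexp (-(s * u))) atTop (𝓝 0) := by
  rw [tendsto_zero_iff_norm_tendsto_zero]
  refine (tendsto_rpow_mul_exp_neg_mul_atTop_nhds_zero n s.re hs).congr' ?_
  filter_upwards [eventually_ge_atTop 0] with u hu
  rw [norm_ofReal_pow_mul_cexp_neg_mul n hu, Real.rpow_natCast]

lemma integrableOn_ofReal_mul_cexp_neg_mul {s : ℂ} (hs : 0 < s.re) :
    IntegrableOn (fun u : ℝ => (u : ℂ) * cexp (-(s * u))) (Ioi 0) := by
  refine Integrable.mono' (integrableOn_rpow_mul_exp_neg_mul_rpow (s := 1) (p := 1)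
    (by norm_num) one_pos hs) (by fun_prop) ?_
  filter_upwards [ae_restrict_mem measurableSet_Ioi] with u hu
  simpa using (norm_ofReal_pow_mul_cexp_neg_mul (s := s) 1 (le_of_lt hu)).le

lemma hasDerivAt_neg_mul_add_one_mul_cexp_neg_mul_div_sq {s : ℂ} (hs : s ≠ 0) (z : ℂ) :
    HasDerivAt (fun z : ℂ => -((s * z + 1) * cexp (-(s * z))) / s ^ 2)
      (z * cexp (-(s * z))) z := by
  have h1 : HasDerivAt (fun z : ℂ => s * z + 1) s z := by
    simpa using ((hasDerivAt_id z).const_mul s).add_const 1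
  have h2 : HasDerivAt (fun z : ℂ => cexp (-(s * z))) (cexp (-(s * z)) * -s) z := by
    simpa using ((hasDerivAt_id z).const_mul s).neg.cexp
  refine ((h1.mul h2).neg.div_const (s ^ 2)).congr_deriv ?_
  field_simp
  ring

lemma integral_Ioi_ofReal_mul_cexp_neg_mul {s : ℂ} (hs : 0 < s.re) :
    ∫ u in Ioi (0 : ℝ), (u : ℂ) * cexp (-(s * u)) = (s ^ 2)⁻¹ := by
  have hs0 : s ≠ 0 := by rintro rfl; simp at hs
  have hF (u : ℝ) := (hasDerivAt_neg_mul_add_one_mul_cexp_neg_mul_div_sq hs0 u).comp_ofReal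
  have hlim : Tendsto (fun u : ℝ => -((s * u + 1) * cexp (-(s * u))) / s ^ 2) atTop (𝓝 0) := by
    simpa [add_mul, mul_assoc] using
      ((tendsto_ofReal_pow_mul_cexp_neg_mul_atTop hs 1).const_mul s |>.add
        (tendsto_ofReal_pow_mul_cexp_neg_mul_atTop hs 0)).neg.div_const (s ^ 2)
  rw [integral_Ioi_of_hasDerivAt_of_tendsto (hF 0).continuousAt.continuousWithinAt
    (fun u _ => hF u) (integrableOn_ofReal_mul_cexp_neg_mul hs) hlim]
  simp [neg_div]

noncomputable def expRamp (s : ℂ) : ℝ → ℂ :=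
  (Ioi 0).indicator fun u => u * cexp (-(s * u))

lemma expRamp_apply (s : ℂ) (u : ℝ) : expRamp s u = if 0 < u then u * cexp (-(s * u)) else 0 := by
  simp [expRamp, indicator_apply]

lemma integrable_expRamp {s : ℂ} (hs : 0 < s.re) : Integrable (expRamp s) :=
  (integrable_indicator_iff measurableSet_Ioi).2 (integrableOn_ofReal_mul_cexp_neg_mul hs)

lemma continuousAt_expRamp (s : ℂ) {u : ℝ} (hu : u ≠ 0) : ContinuousAt (expRamp s) u := by
  rcases hu.lt_or_gt with hu | hu
  · refine (continuousAt_const (y := (0 : ℂ))).congr ?_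
    filter_upwards [Iio_mem_nhds hu] with v hv
    simp [expRamp, (show v < 0 from hv).not_gt]
  · refine (show Continuous fun v : ℝ => (v : ℂ) * cexp (-(s * v)) by fun_prop)
      |>.continuousAt.congr ?_
    filter_upwards [Ioi_mem_nhds hu] with v hv
    simp [expRamp, show 0 < v from hv]

open scoped FourierTransform in
lemma fourier_expRamp {s : ℂ} (hs : 0 < s.re) (ξ : ℝ) :
    𝓕 (expRamp s) ξ = ((s + (2 * Real.pi * ξ : ℝ) * I) ^ 2)⁻¹ := by
  have hre : 0 < (s + (2 * Real.pi * ξ : ℝ) * I).re := by simpa using hs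
  rw [Real.fourier_eq', ← integral_Ioi_ofReal_mul_cexp_neg_mul hre,
    ← integral_indicator measurableSet_Ioi]
  congr 1 with u
  by_cases hu : u ∈ Ioi 0
  · simp only [expRamp, indicator_of_mem hu, smul_eq_mul, Real.inner_apply]
    rw [mul_left_comm, ← Complex.exp_add]
    congr 2
    push_cast
    ring
  · simp [expRamp, hu]

lemma ofReal_add_mul_I_ne_zero {c : ℝ} (hc : c ≠ 0) (t : ℝ) : (c : ℂ) + t * I ≠ 0 := by
  intro h
  simpa [hc] using congrArg re h

lemma norm_ofReal_add_mul_I_sq (c t : ℝ) : ‖((c : ℂ) + t * I) ^ 2‖ = c ^ 2 + t ^ 2 := by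
  rw [norm_pow, norm_add_mul_I, Real.sq_sqrt (by positivity)]

lemma tendsto_ofReal_add_mul_I_cocompact (c : ℝ) :
    Tendsto (fun t : ℝ => (c : ℂ) + t * I) (cocompact ℝ) (Bornology.cobounded ℂ) := by
  rw [← tendsto_norm_atTop_iff_cobounded]
  refine tendsto_atTop_mono (fun t => ?_) tendsto_norm_cocompact_atTop
  simpa using abs_im_le_norm ((c : ℂ) + t * I)

lemma integrable_inv_ofReal_add_mul_I_sq {c : ℝ} (hc : c ≠ 0) :
    Integrable fun t : ℝ => (((c : ℂ) + t * I) ^ 2)⁻¹ := by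
  refine ((integrable_inv_one_add_sq.comp_div hc).const_mul (c ^ 2)⁻¹).mono'
    (Continuous.aestronglyMeasurable ?_) (.of_forall fun t => le_of_eq ?_)
  · exact (by fun_prop : Continuous _).inv₀ fun t => pow_ne_zero 2 (ofReal_add_mul_I_ne_zero hc t)
  · rw [norm_inv, norm_ofReal_add_mul_I_sq, ← mul_inv]
    congr 1
    field_simp

lemma integrable_cexp_mul_I_mul_inv_sq {c : ℝ} (hc : c ≠ 0) (Y : ℝ) :
    Integrable fun t : ℝ => cexp (↑(t * Y) * I) * (((c : ℂ) + t * I) ^ 2)⁻¹ :=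
  (integrable_inv_ofReal_add_mul_I_sq hc).bdd_mul (c := 1) (by fun_prop)
    (.of_forall fun t => (norm_exp_ofReal_mul_I _).le)

open scoped FourierTransform in
lemma integral_cexp_mul_I_mul_inv_sq {c : ℝ} (hc : 0 < c) {Y : ℝ} (hY : Y ≠ 0) :
    ∫ t : ℝ, cexp (↑(t * Y) * I) * (((c : ℂ) + t * I) ^ 2)⁻¹ =
      2 * Real.pi * expRamp c Y := by
  have hre : 0 < (c : ℂ).re := by simpa using hc
  have hF : 𝓕 (expRamp c) = fun ξ : ℝ => (((c : ℂ) + (2 * Real.pi * ξ : ℝ) * I) ^ 2)⁻¹ :=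
    funext (fourier_expRamp hre)
  have hFint : Integrable (𝓕 (expRamp c)) := by
    rw [hF]
    exact (integrable_inv_ofReal_add_mul_I_sq hc.ne').comp_mul_left' (by positivity)
  have hinv := (integrable_expRamp hre).fourierInv_fourier_eq hFint (continuousAt_expRamp c hY)
  rw [Real.fourierInv_eq', hF] at hinv
  simp only [Real.inner_apply, smul_eq_mul, ← mul_assoc] at hinv
  rw [Measure.integral_comp_mul_left
    (fun t : ℝ => cexp (↑(t * Y) * I) * (((c : ℂ) + t * I) ^ 2)⁻¹),
    abs_of_pos (by positivity), Complex.real_smul] at hinv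
  have h2π : (2 * Real.pi : ℂ) * ((2 * Real.pi)⁻¹ : ℝ) = 1 := by
    push_cast
    field_simp
  rw [← hinv, ← mul_assoc, h2π, one_mul]

lemma hasDerivAt_inv_ofReal_add_mul_I {c : ℝ} (hc : c ≠ 0) (t : ℝ) :
    HasDerivAt (fun t : ℝ => ((c : ℂ) + t * I)⁻¹) (-I / ((c : ℂ) + t * I) ^ 2) t := by
  have h : HasDerivAt (fun z : ℂ => (c : ℂ) + z * I) I t := by
    simpa using ((hasDerivAt_id (t : ℂ)).mul_const I).const_add (c : ℂ)
  exact (h.inv (ofReal_add_mul_I_ne_zero hc t)).comp_ofReal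

lemma hasDerivAt_cexp_ofReal_mul_mul_I_div {Y : ℝ} (hY : Y ≠ 0) (t : ℝ) :
    HasDerivAt (fun t : ℝ => cexp (↑(t * Y) * I) / (Y * I)) (cexp (↑(t * Y) * I)) t := by
  have h : HasDerivAt (fun t : ℝ => (↑(t * Y) * I : ℂ)) (Y * I) t := by
    simpa [mul_assoc] using ((ofRealCLM.hasDerivAt (x := t)).mul_const ((Y : ℂ) * I))
  refine (h.cexp.div_const _).congr_deriv ?_
  field_simp [ofReal_ne_zero.2 hY]

lemma intervalIntegral_inv_mul_cexp_mul_I {c : ℝ} (hc : c ≠ 0) {Y : ℝ} (hY : Y ≠ 0) (a b : ℝ) :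
    ∫ t in a..b, ((c : ℂ) + t * I)⁻¹ * cexp (↑(t * Y) * I) =
      ((c : ℂ) + b * I)⁻¹ * (cexp (↑(b * Y) * I) / (Y * I)) -
        ((c : ℂ) + a * I)⁻¹ * (cexp (↑(a * Y) * I) / (Y * I)) +
      (Y : ℂ)⁻¹ * ∫ t in a..b, cexp (↑(t * Y) * I) * (((c : ℂ) + t * I) ^ 2)⁻¹ := by
  have hu' : Continuous fun t : ℝ => -I / ((c : ℂ) + t * I) ^ 2 :=
    continuous_const.div (by fun_prop) fun t => pow_ne_zero 2 (ofReal_add_mul_I_ne_zero hc t)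
  rw [intervalIntegral.integral_mul_deriv_eq_deriv_mul
    (fun t _ => hasDerivAt_inv_ofReal_add_mul_I hc t)
    (fun t _ => hasDerivAt_cexp_ofReal_mul_mul_I_div hY t)
    (hu'.intervalIntegrable _ _)
    ((by fun_prop : Continuous fun t : ℝ => cexp (↑(t * Y) * I)).intervalIntegrable _ _),
    ← intervalIntegral.integral_const_mul, sub_eq_add_neg, ← intervalIntegral.integral_neg]
  congr 2 with t
  field_simp [ofReal_ne_zero.2 hY]

lemma tendsto_inv_ofReal_add_mul_I_mul_cexp_cocompact (c Y : ℝ) (w : ℂ) :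
    Tendsto (fun t : ℝ => ((c : ℂ) + t * I)⁻¹ * (cexp (↑(t * Y) * I) * w)) (cocompact ℝ) (𝓝 0) :=
  (tendsto_inv₀_cobounded.comp (tendsto_ofReal_add_mul_I_cocompact c)).zero_mul_isBoundedUnder_le
    (isBoundedUnder_of ⟨‖w‖, fun t => by
      rw [Function.comp_apply, norm_mul, norm_exp_ofReal_mul_I, one_mul]⟩)

lemma tendsto_intervalIntegral_inv_mul_cexp_mul_I {c : ℝ} (hc : 0 < c) {Y : ℝ} (hY : Y ≠ 0) :
    Tendsto (fun T : ℝ => ∫ t in -T..T, ((c : ℂ) + t * I)⁻¹ * cexp (↑(t * Y) * I)) atTop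
      (𝓝 ((Y : ℂ)⁻¹ * (2 * Real.pi * expRamp c Y))) := by
  simp_rw [intervalIntegral_inv_mul_cexp_mul_I hc.ne' hY, div_eq_mul_inv _ ((Y : ℂ) * I)]
  have hbdry := tendsto_inv_ofReal_add_mul_I_mul_cexp_cocompact c Y ((Y : ℂ) * I)⁻¹
  rw [← integral_cexp_mul_I_mul_inv_sq hc hY]
  have := ((hbdry.mono_left atTop_le_cocompact).sub
    ((hbdry.mono_left atBot_le_cocompact).comp tendsto_neg_atTop_atBot)).add
    ((intervalIntegral_tendsto_integral (integrable_cexp_mul_I_mul_inv_sq hc.ne' Y)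
      tendsto_neg_atTop_atBot tendsto_id).const_mul (Y : ℂ)⁻¹)
  rwa [sub_zero, zero_add] at this

/-- For `c > 0` and `Y ≠ 0` real, the principal-value integral
`(1/(2πi)) ∫_{c-i∞}^{c+i∞} e^{Ys} ds/s` equals `1` if `Y > 0` and `0` if `Y < 0`,
parametrizing `s = c + it`. -/
theorem perron_exponential_integral (c : ℝ) (hc : 0 < c) (Y : ℝ) (hY : Y ≠ 0) :
    Tendsto (fun T : ℝ =>
      (2 * Real.pi * Complex.I)⁻¹ *
        ∫ t in (-T)..T,
          Complex.exp ((Y : ℂ) * ((c : ℂ) + t * Complex.I)) / ((c : ℂ) + t * Complex.I) *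
            Complex.I)
      atTop (nhds (if 0 < Y then 1 else 0)) := by
  have hintegrand (t : ℝ) : cexp (Y * (c + t * I)) / (c + t * I) * I =
      cexp (Y * c) * I * (((c : ℂ) + t * I)⁻¹ * cexp (↑(t * Y) * I)) := by
    rw [mul_add, Complex.exp_add]
    push_cast
    ring_nf
  have hlimit : (2 * Real.pi * I)⁻¹ *
      (cexp (Y * c) * I * ((Y : ℂ)⁻¹ * (2 * Real.pi * expRamp c Y))) = if 0 < Y then 1 else 0 := by
    rw [expRamp_apply]
    split_ifs
    · rw [mul_comm (c : ℂ), Complex.exp_neg]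
      field_simp [hY]
    · simp
  simp_rw [hintegrand, intervalIntegral.integral_const_mul, ← hlimit]
  exact ((tendsto_intervalIntegral_inv_mul_cexp_mul_I hc hY).const_mul _).const_mul _
end

section
/- For any prime p, integer k ≥ 1, and complex numbers z_1,…,z_{2k} with Re(z_j) > 1/(2k) for all j, the local Euler factor ∑ over tuples (m_1,…,m_{2k}) of nonnegative integers with m_1+⋯+m_k = m_{k+1}+⋯+m_{2k} of p^{−(m_1 z_1 + ⋯ + m_{2k} z_{2k})} converges absolutely and equals 1 + ∑_{i=1}^k ∑_{j=k+1}^{2k} p^{−(z_i+z_j)} + E_p where |E_p| ≤ C · p^{−min over pairs of Re(z_{i_1}+z_{j_1}+z_{i_2}+z_{j_2})} for a constant C depending only on k. -/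
open Finset

/-- The balanced `2k`-tuples of nonnegative integers: `m_1 + ⋯ + m_k = m_{k+1} + ⋯ + m_{2k}`. -/
def BalancedTuple (k : ℕ) : Type :=
  {f : Fin (2 * k) → ℕ //
    ∑ i ∈ univ.filter (fun i : Fin (2 * k) => (i : ℕ) < k), f i =
      ∑ i ∈ univ.filter (fun i : Fin (2 * k) => k ≤ (i : ℕ)), f i}

/-!
Write `t = 2 ^ (-δ) < 1` with `δ = 1 / (2k)`, `|m| = ∑ m_j`, and let `M` be the minimum of
`Re (z_{i₁} + z_{j₁} + z_{i₂} + z_{j₂})`. Each term has modulus `p ^ (-∑ m_j Re z_j) ≤ t ^ |m|`,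
and `∑_m t ^ |m| ≤ (1 - t) ^ (-2k)`, which gives absolute convergence. A balanced tuple whose
first half has weight at most `1` is `0` or `e_i + e_j` with `i < k ≤ j`; these contribute
`1 + ∑ p ^ (-(z_i + z_j))`. Every other balanced tuple `m` dominates some
`e_{i₁} + e_{i₂} + e_{j₁} + e_{j₂}` with `i₁, i₂ < k ≤ j₁, j₂`, so its term is at most
`p ^ (-M) t ^ (|m| - 4)`; summing bounds the remainder by `t ^ (-4) (1 - t) ^ (-2k) p ^ (-M)`.
-/

open Function

section Counting

variable {α : Type*} [DecidableEq α]

theorem exists_add_single_le_of_sum_lt {s : Finset α} {f g : α → ℕ} (hgf : g ≤ f)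
    (h : ∑ i ∈ s, g i < ∑ i ∈ s, f i) : ∃ i ∈ s, g + Pi.single i 1 ≤ f := by
  obtain ⟨i, hi, hlt⟩ := exists_lt_of_sum_lt h
  refine ⟨i, hi, fun l => ?_⟩
  rcases eq_or_ne l i with rfl | hl
  · simpa using hlt
  · simpa [hl] using hgf l

theorem exists_add_single_add_single_le {s : Finset α} {f g : α → ℕ} (hgf : g ≤ f)
    (h : ∑ i ∈ s, g i + 2 ≤ ∑ i ∈ s, f i) :
    ∃ i ∈ s, ∃ j ∈ s, g + Pi.single i 1 + Pi.single j 1 ≤ f := by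
  obtain ⟨i, hi, hgi⟩ := exists_add_single_le_of_sum_lt (s := s) hgf (by omega)
  obtain ⟨j, hj, hgij⟩ := exists_add_single_le_of_sum_lt (s := s) hgi
    (by simp only [Pi.add_apply, sum_add_distrib, sum_pi_single', if_pos hi]; omega)
  exact ⟨i, hi, j, hj, hgij⟩

end Counting

section EulerTerm

variable {ι : Type*} [Fintype ι]

noncomputable def eulerTerm (p : ℕ) (z : ι → ℂ) (m : ι → ℕ) : ℂ :=
  (p : ℂ) ^ (-∑ j, (m j : ℂ) * z j)

@[simp]
theorem eulerTerm_zero (p : ℕ) (z : ι → ℂ) : eulerTerm p z 0 = 1 := by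
  simp [eulerTerm]

theorem eulerTerm_single_add_single [DecidableEq ι] (p : ℕ) (z : ι → ℂ) (i j : ι) :
    eulerTerm p z (Pi.single i 1 + Pi.single j 1) = (p : ℂ) ^ (-(z i + z j)) := by
  simp [eulerTerm, Pi.single_apply, add_mul, sum_add_distrib]

theorem norm_eulerTerm {p : ℕ} (hp : 0 < p) (z : ι → ℂ) (m : ι → ℕ) :
    ‖eulerTerm p z m‖ = (p : ℝ) ^ (-∑ j, (m j : ℝ) * (z j).re) := by
  simp [eulerTerm, Complex.norm_natCast_cpow_of_pos hp, Complex.re_sum]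

theorem norm_eulerTerm_le {p : ℕ} (hp : 2 ≤ p) {δ : ℝ} (hδ : 0 ≤ δ) {z : ι → ℂ}
    (hz : ∀ j, δ ≤ (z j).re) {m n : ι → ℕ} (hnm : n ≤ m) :
    ‖eulerTerm p z m‖ ≤
      (p : ℝ) ^ (-∑ j, (n j : ℝ) * (z j).re) * ((2 : ℝ) ^ (-δ)) ^ ∑ j, (m j - n j) := by
  have hp0 : (0 : ℝ) < p := by positivity
  have hp1 : (2 : ℝ) ≤ p := by exact_mod_cast hp
  have hexp : ∑ j, (n j : ℝ) * (z j).re + (∑ j, (m j - n j) : ℕ) * δ ≤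
      ∑ j, (m j : ℝ) * (z j).re := by
    rw [Nat.cast_sum, sum_mul, ← sum_add_distrib]
    refine sum_le_sum fun j _ => ?_
    have hnm_j : (n j : ℝ) ≤ m j := by exact_mod_cast hnm j
    have := mul_le_mul_of_nonneg_left (hz j) (sub_nonneg.2 hnm_j)
    rw [Nat.cast_sub (hnm j)]
    linarith
  calc ‖eulerTerm p z m‖ = (p : ℝ) ^ (-∑ j, (m j : ℝ) * (z j).re) :=
        norm_eulerTerm (by omega) z m
    _ ≤ (p : ℝ) ^ (-(∑ j, (n j : ℝ) * (z j).re + (∑ j, (m j - n j) : ℕ) * δ)) :=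
      Real.rpow_le_rpow_of_exponent_le (by linarith : (1 : ℝ) ≤ p) (neg_le_neg hexp)
    _ = (p : ℝ) ^ (-∑ j, (n j : ℝ) * (z j).re) * ((p : ℝ) ^ (-δ)) ^ ∑ j, (m j - n j) := by
      rw [neg_add, Real.rpow_add hp0, ← Real.rpow_natCast, ← Real.rpow_mul hp0.le]
      ring_nf
    _ ≤ _ := by
      have hbase : (p : ℝ) ^ (-δ) ≤ 2 ^ (-δ) :=
        Real.rpow_le_rpow_of_nonpos two_pos hp1 (by linarith)
      gcongr

theorem sum_pow_sum_le {t : ℝ} (ht0 : 0 ≤ t) (ht1 : t < 1) (s : Finset (ι → ℕ)) :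
    ∑ m ∈ s, t ^ ∑ j, m j ≤ (1 - t)⁻¹ ^ Fintype.card ι := by
  classical
  obtain ⟨N, hN⟩ : ∃ N, ∀ m ∈ s, ∀ j, m j < N :=
    ⟨s.sup (fun m => univ.sup m) + 1, fun m hm j =>
      Nat.lt_succ_of_le ((le_sup (f := m) (mem_univ j)).trans
        (le_sup (f := fun m => univ.sup m) hm))⟩
  calc ∑ m ∈ s, t ^ ∑ j, m j ≤ ∑ m ∈ Fintype.piFinset fun _ => range N, ∏ j, t ^ m j := by
        simp_rw [prod_pow_eq_pow_sum]
        exact sum_le_sum_of_subset_of_nonneg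
          (fun m hm => Fintype.mem_piFinset.2 fun j => mem_range.2 (hN m hm j))
          (fun _ _ _ => by positivity)
    _ = ∏ _j : ι, ∑ i ∈ range N, t ^ i := (prod_univ_sum _ _).symm
    _ ≤ ∏ _j : ι, (1 - t)⁻¹ := by
      gcongr
      rw [← tsum_geometric_of_lt_one ht0 ht1]
      exact (summable_geometric_of_lt_one ht0 ht1).sum_le_tsum _ fun _ _ => by positivity
    _ = (1 - t)⁻¹ ^ Fintype.card ι := by simp

theorem summable_pow_sum {t : ℝ} (ht0 : 0 ≤ t) (ht1 : t < 1) :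
    Summable fun m : ι → ℕ => t ^ ∑ j, m j :=
  summable_of_sum_le (fun _ => by positivity) (sum_pow_sum_le ht0 ht1)

theorem tsum_pow_sum_le {t : ℝ} (ht0 : 0 ≤ t) (ht1 : t < 1) :
    ∑' m : ι → ℕ, t ^ ∑ j, m j ≤ (1 - t)⁻¹ ^ Fintype.card ι :=
  Real.tsum_le_of_sum_le (fun _ => by positivity) (sum_pow_sum_le ht0 ht1)

theorem summable_norm_eulerTerm {p : ℕ} (hp : 2 ≤ p) {δ : ℝ} (hδ : 0 < δ) {z : ι → ℂ}
    (hz : ∀ j, δ ≤ (z j).re) : Summable fun m : ι → ℕ => ‖eulerTerm p z m‖ := by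
  refine (summable_pow_sum (t := 2 ^ (-δ)) (by positivity)
    (Real.rpow_lt_one_of_one_lt_of_neg one_lt_two (by linarith))).of_nonneg_of_le
    (fun _ => norm_nonneg _) fun m => ?_
  simpa using norm_eulerTerm_le hp hδ.le hz (zero_le (a := m))

end EulerTerm

section Balanced

variable {k : ℕ}

abbrev lowerHalf (k : ℕ) : Finset (Fin (2 * k)) := univ.filter fun i => (i : ℕ) < k

abbrev upperHalf (k : ℕ) : Finset (Fin (2 * k)) := univ.filter fun j => k ≤ (j : ℕ)

theorem sum_lowerHalf_add_sum_upperHalf (m : Fin (2 * k) → ℕ) :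
    ∑ i ∈ lowerHalf k, m i + ∑ j ∈ upperHalf k, m j = ∑ i, m i := by
  simpa only [not_lt] using
    sum_filter_add_sum_filter_not univ (fun i : Fin (2 * k) => (i : ℕ) < k) m

theorem BalancedTuple.sum_eq_two_mul (x : BalancedTuple k) :
    ∑ i, x.1 i = 2 * ∑ i ∈ lowerHalf k, x.1 i := by
  rw [← sum_lowerHalf_add_sum_upperHalf, ← x.2]
  exact (two_mul _).symm

theorem sum_halves_pi_single_of_mem_lowerHalf {i : Fin (2 * k)} (hi : i ∈ lowerHalf k) :
    ∑ l ∈ lowerHalf k, Pi.single i 1 l = 1 ∧ ∑ l ∈ upperHalf k, Pi.single i 1 l = 0 := by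
  simp_all [sum_pi_single']

theorem sum_halves_pi_single_of_mem_upperHalf {j : Fin (2 * k)} (hj : j ∈ upperHalf k) :
    ∑ l ∈ lowerHalf k, Pi.single j 1 l = 0 ∧ ∑ l ∈ upperHalf k, Pi.single j 1 l = 1 := by
  simp_all [sum_pi_single']

theorem ne_of_mem_lowerHalf_of_mem_upperHalf {i j : Fin (2 * k)} (hi : i ∈ lowerHalf k)
    (hj : j ∈ upperHalf k) : i ≠ j := by
  rintro rfl
  simp at hi hj
  omega

def lowTuple (k : ℕ) : Option (lowerHalf k × upperHalf k) → BalancedTuple k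
  | none => ⟨0, by simp⟩
  | some (i, j) => ⟨Pi.single (i : Fin (2 * k)) 1 + Pi.single (j : Fin (2 * k)) 1, by
      simp [sum_add_distrib, sum_halves_pi_single_of_mem_lowerHalf i.2,
        sum_halves_pi_single_of_mem_upperHalf j.2]⟩

theorem lowTuple_injective : Injective (lowTuple k) := by
  rintro (_ | ⟨i, j⟩) (_ | ⟨i', j'⟩) h <;> have hval := congrArg Subtype.val h
  · rfl
  · simpa [lowTuple, ne_of_mem_lowerHalf_of_mem_upperHalf i'.2 j'.2] using congrFun hval i'
  · simpa [lowTuple, ne_of_mem_lowerHalf_of_mem_upperHalf i.2 j.2] using congrFun hval i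
  · have hi := congrFun hval i
    have hj := congrFun hval j
    simp [lowTuple, Pi.single_apply, ne_of_mem_lowerHalf_of_mem_upperHalf i.2 j.2,
      ne_of_mem_lowerHalf_of_mem_upperHalf i'.2 j.2,
      ne_of_mem_lowerHalf_of_mem_upperHalf i.2 j'.2] at hi hj
    rw [hi, hj]

theorem mem_range_lowTuple {x : BalancedTuple k} (hx : ∑ i ∈ lowerHalf k, x.1 i ≤ 1) :
    x ∈ Set.range (lowTuple k) := by
  have htotal := x.sum_eq_two_mul
  obtain hzero | hone : ∑ i ∈ lowerHalf k, x.1 i = 0 ∨ ∑ i ∈ lowerHalf k, x.1 i = 1 := by omega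
  · refine ⟨none, Subtype.ext (funext fun l => ?_)⟩
    exact (sum_eq_zero_iff.1 (by omega) l (mem_univ l)).symm
  · obtain ⟨i, hi, hle_i⟩ := exists_add_single_le_of_sum_lt (s := lowerHalf k) (zero_le (a := x.1))
      (by simp [hone])
    obtain ⟨j, hj, hle_ij⟩ := exists_add_single_le_of_sum_lt (s := upperHalf k) hle_i
      (by simp [(sum_halves_pi_single_of_mem_lowerHalf hi).2, ← x.2, hone])
    refine ⟨some (⟨i, hi⟩, ⟨j, hj⟩), Subtype.ext (funext fun l => ?_)⟩
    rw [zero_add] at hle_ij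
    refine (sum_eq_sum_iff_of_le fun l _ => hle_ij l).1 ?_ l (mem_univ l)
    simp [sum_add_distrib, htotal, hone]

theorem exists_le_of_notMem_range_lowTuple {x : BalancedTuple k}
    (hx : x ∉ Set.range (lowTuple k)) :
    ∃ i₁ ∈ lowerHalf k, ∃ i₂ ∈ lowerHalf k, ∃ j₁ ∈ upperHalf k, ∃ j₂ ∈ upperHalf k,
      Pi.single i₁ 1 + Pi.single i₂ 1 + Pi.single j₁ 1 + Pi.single j₂ 1 ≤ x.1 := by
  have hweight : 2 ≤ ∑ i ∈ lowerHalf k, x.1 i := by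
    by_contra! h
    exact hx (mem_range_lowTuple (by omega))
  obtain ⟨i₁, hi₁, i₂, hi₂, hle_i⟩ :=
    exists_add_single_add_single_le (s := lowerHalf k) (zero_le (a := x.1))
      (by simpa using hweight)
  obtain ⟨j₁, hj₁, j₂, hj₂, hle_ij⟩ := exists_add_single_add_single_le (s := upperHalf k) hle_i
    (by simp [sum_add_distrib, (sum_halves_pi_single_of_mem_lowerHalf hi₁).2,
      (sum_halves_pi_single_of_mem_lowerHalf hi₂).2, ← x.2, hweight])
  exact ⟨i₁, hi₁, i₂, hi₂, j₁, hj₁, j₂, hj₂, by simpa using hle_ij⟩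

theorem sum_eulerTerm_lowTuple (p : ℕ) (z : Fin (2 * k) → ℂ) :
    ∑ q, eulerTerm p z (lowTuple k q).1 =
      1 + ∑ i ∈ lowerHalf k, ∑ j ∈ upperHalf k, (p : ℂ) ^ (-(z i + z j)) := by
  simp only [Fintype.sum_option, Fintype.sum_prod_type, lowTuple, eulerTerm_zero,
    eulerTerm_single_add_single]
  rw [← sum_coe_sort (lowerHalf k)]
  simp_rw [← sum_coe_sort (upperHalf k)]

variable {p : ℕ} {δ : ℝ} {z : Fin (2 * k) → ℂ} {M : ℝ}

theorem norm_eulerTerm_le_of_notMem_range_lowTuple (hp : 2 ≤ p) (hδ : 0 ≤ δ)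
    (hz : ∀ j, δ ≤ (z j).re)
    (hM : ∀ i₁ ∈ lowerHalf k, ∀ i₂ ∈ lowerHalf k, ∀ j₁ ∈ upperHalf k, ∀ j₂ ∈ upperHalf k,
      M ≤ (z i₁ + z j₁ + z i₂ + z j₂).re)
    {x : BalancedTuple k} (hx : x ∉ Set.range (lowTuple k)) :
    ‖eulerTerm p z x.1‖ ≤
      (p : ℝ) ^ (-M) * ((((2 : ℝ) ^ (-δ)) ^ 4)⁻¹ * ((2 : ℝ) ^ (-δ)) ^ ∑ j, x.1 j) := by
  obtain ⟨i₁, hi₁, i₂, hi₂, j₁, hj₁, j₂, hj₂, hle⟩ := exists_le_of_notMem_range_lowTuple hx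
  set n : Fin (2 * k) → ℕ := Pi.single i₁ 1 + Pi.single i₂ 1 + Pi.single j₁ 1 + Pi.single j₂ 1
  have hn_re : ∑ l, (n l : ℝ) * (z l).re = (z i₁ + z j₁ + z i₂ + z j₂).re := by
    simp [n, Pi.single_apply, add_mul, sum_add_distrib]
    ring
  have hn_sum : ∑ l, n l = 4 := by simp [n, sum_add_distrib]
  have h4 : 4 ≤ ∑ l, x.1 l := hn_sum ▸ sum_le_sum fun l _ => hle l
  have ht : (2 : ℝ) ^ (-δ) ≠ 0 := by positivity
  calc ‖eulerTerm p z x.1‖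
      ≤ (p : ℝ) ^ (-∑ l, (n l : ℝ) * (z l).re) * ((2 : ℝ) ^ (-δ)) ^ ∑ l, (x.1 l - n l) :=
        norm_eulerTerm_le hp hδ hz hle
    _ ≤ (p : ℝ) ^ (-M) * ((2 : ℝ) ^ (-δ)) ^ (∑ l, x.1 l - 4) := by
        rw [hn_re, sum_tsub_distrib _ fun l _ => hle l, hn_sum]
        gcongr
        · exact_mod_cast hp.trans' one_le_two
        · exact hM i₁ hi₁ i₂ hi₂ j₁ hj₁ j₂ hj₂
    _ = _ := by rw [pow_sub₀ _ ht h4]; ring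

theorem norm_tsum_compl_range_lowTuple_le (hp : 2 ≤ p) (hδ : 0 < δ)
    (hz : ∀ j, δ ≤ (z j).re)
    (hM : ∀ i₁ ∈ lowerHalf k, ∀ i₂ ∈ lowerHalf k, ∀ j₁ ∈ upperHalf k, ∀ j₂ ∈ upperHalf k,
      M ≤ (z i₁ + z j₁ + z i₂ + z j₂).re) :
    ‖∑' x : ↥(Set.range (lowTuple k))ᶜ, eulerTerm p z x.1.1‖ ≤
      (((2 : ℝ) ^ (-δ)) ^ 4)⁻¹ * (1 - (2 : ℝ) ^ (-δ))⁻¹ ^ (2 * k) * (p : ℝ) ^ (-M) := by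
  set t : ℝ := 2 ^ (-δ)
  have ht0 : 0 < t := by positivity
  have ht1 : t < 1 := Real.rpow_lt_one_of_one_lt_of_neg one_lt_two (by linarith)
  have hsummable : Summable fun x : ↥(Set.range (lowTuple k))ᶜ => ‖eulerTerm p z x.1.1‖ :=
    (summable_norm_eulerTerm hp hδ hz).comp_injective
      (Subtype.val_injective.comp Subtype.val_injective)
  calc ‖∑' x : ↥(Set.range (lowTuple k))ᶜ, eulerTerm p z x.1.1‖
      ≤ ∑' x : ↥(Set.range (lowTuple k))ᶜ, ‖eulerTerm p z x.1.1‖ :=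
        norm_tsum_le_tsum_norm hsummable
    _ ≤ ∑' m : Fin (2 * k) → ℕ, (p : ℝ) ^ (-M) * ((t ^ 4)⁻¹ * t ^ ∑ j, m j) :=
        hsummable.tsum_le_tsum_of_inj (fun x => x.1.1)
          (Subtype.val_injective.comp Subtype.val_injective) (fun _ _ => by positivity)
          (fun x => norm_eulerTerm_le_of_notMem_range_lowTuple hp hδ.le hz hM x.2)
          (((summable_pow_sum ht0.le ht1).mul_left _).mul_left _)
    _ = (t ^ 4)⁻¹ * (∑' m : Fin (2 * k) → ℕ, t ^ ∑ j, m j) * (p : ℝ) ^ (-M) := by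
        rw [tsum_mul_left, tsum_mul_left]
        ring
    _ ≤ (t ^ 4)⁻¹ * (1 - t)⁻¹ ^ (2 * k) * (p : ℝ) ^ (-M) := by
        gcongr
        simpa using tsum_pow_sum_le (ι := Fin (2 * k)) ht0.le ht1

end Balanced

/-- The local Euler factor `∑ p^{−(m_1 z_1 + ⋯ + m_{2k} z_{2k})}` over balanced tuples
converges absolutely and equals `1 + ∑_{i ≤ k < j} p^{−(z_i + z_j)} + E_p` with
`|E_p| ≤ C p^{−min re(z_{i_1} + z_{j_1} + z_{i_2} + z_{j_2})}`, `C` depending only on `k`. -/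
theorem local_euler_factor_expansion (k : ℕ) (hk : 1 ≤ k) :
    ∃ C : ℝ, 0 < C ∧ ∀ p : ℕ, p.Prime → ∀ z : Fin (2 * k) → ℂ,
      (∀ j, 1 / (2 * k : ℝ) < (z j).re) →
      Summable (fun f : BalancedTuple k =>
        ‖(p : ℂ) ^ (-(∑ j, (f.1 j : ℂ) * z j))‖) ∧
      ∃ E : ℂ,
        (∑' f : BalancedTuple k, (p : ℂ) ^ (-(∑ j, (f.1 j : ℂ) * z j))) =
            1 + (∑ i ∈ univ.filter (fun i : Fin (2 * k) => (i : ℕ) < k),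
                  ∑ j ∈ univ.filter (fun j : Fin (2 * k) => k ≤ (j : ℕ)),
                    (p : ℂ) ^ (-(z i + z j))) + E ∧
        ‖E‖ ≤ C * (p : ℝ) ^
          (-(sInf {r : ℝ | ∃ i₁ j₁ i₂ j₂ : Fin (2 * k),
              (i₁ : ℕ) < k ∧ (i₂ : ℕ) < k ∧ k ≤ (j₁ : ℕ) ∧ k ≤ (j₂ : ℕ) ∧
                r = (z i₁ + z j₁ + z i₂ + z j₂).re})) := by
  set δ : ℝ := 1 / (2 * k : ℝ)
  have hδ : 0 < δ := by
    have : (1 : ℝ) ≤ k := by exact_mod_cast hk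
    positivity
  have ht1 : (2 : ℝ) ^ (-δ) < 1 := Real.rpow_lt_one_of_one_lt_of_neg one_lt_two (by linarith)
  refine ⟨(((2 : ℝ) ^ (-δ)) ^ 4)⁻¹ * (1 - (2 : ℝ) ^ (-δ))⁻¹ ^ (2 * k),
    by have := sub_pos.2 ht1; positivity, fun p hp z hz => ?_⟩
  have hz' : ∀ j, δ ≤ (z j).re := fun j => (hz j).le
  have hsummable : Summable fun x : BalancedTuple k => ‖eulerTerm p z x.1‖ :=
    (summable_norm_eulerTerm hp.two_le hδ hz').comp_injective Subtype.val_injective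
  refine ⟨hsummable, _, ?_, norm_tsum_compl_range_lowTuple_le hp.two_le hδ hz'
    fun i₁ hi₁ i₂ hi₂ j₁ hj₁ j₂ hj₂ => ?_⟩
  · change ∑' x : BalancedTuple k, eulerTerm p z x.1 = _
    rw [← hsummable.of_norm.tsum_subtype_add_tsum_subtype_compl (Set.range (lowTuple k)),
      tsum_range (fun x : BalancedTuple k => eulerTerm p z x.1) lowTuple_injective, tsum_fintype,
      sum_eulerTerm_lowTuple]
  · refine csInf_le ⟨4 * δ, ?_⟩ ⟨i₁, j₁, i₂, j₂, (mem_filter.1 hi₁).2, (mem_filter.1 hi₂).2,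
      (mem_filter.1 hj₁).2, (mem_filter.1 hj₂).2, rfl⟩
    rintro _ ⟨i₁, j₁, i₂, j₂, -, -, -, -, rfl⟩
    simp only [Complex.add_re]
    linarith [hz' i₁, hz' j₁, hz' i₂, hz' j₂]
end
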